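/- Let n ≥ 2 and let G = (V,E) be an undirected connected graph on V = {1,…,n} with (i,i) ∈ E for every i. Let S = {W ∈ ℝ^{n×n} : W1 = 1, Wᵀ1 = 1, and W_{ij} = 0 for all (i,j) ∉ E}. If W* ∈ S minimizes the induced 2-norm ‖W − (1/n)11ᵀ‖ over S, then ‖W* − (1/n)11ᵀ‖ < 1, and hence ρ(W* − (1/n)11ᵀ) < 1, so W* satisfies the average consensus condition W*1 = 1, (W*)ᵀ1 = 1, ρ(W* − (1/n)11ᵀ) < 1. -/

import Mathlib

/-!
Take the Laplacian weight `W = 1 - α L` of the connectivity graph: it is symmetric, has unit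
row sums and is supported on the edges. Since `L 1 = 0`, `(W - J) x = (1 - α L) y` with
`y = x - J x ⊥ 1`. Writing `L = Bᵀ B` gives `‖L y‖² ≤ c ⟪y, L y⟫`, so for `α = c⁻¹` we get
`‖(1 - α L) y‖² ≤ ‖y‖² - α ⟪y, L y⟫`, and connectivity makes `⟪y, L y⟫ > 0` for `y ≠ 0`. Thus
`W - J` strictly shrinks every nonzero vector, hence has norm `< 1` by compactness of the unit
sphere, and the optimal `W*` does at least as well. Finally every spectral value of the
complexification of a real matrix `A` is bounded by `‖A‖`, as the complexification acts on real
and imaginary parts separately.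
-/

open Matrix Filter

/-- Spectral radius of a real matrix: the maximum modulus of its complex eigenvalues. -/
noncomputable def specRad {n : ℕ} (A : Matrix (Fin n) (Fin n) ℝ) : ℝ :=
  sSup {r : ℝ | ∃ μ : ℂ, μ ∈ spectrum ℂ (A.map Complex.ofReal) ∧ r = ‖μ‖}

/-- Induced 2-norm (largest singular value) of a real matrix. -/
noncomputable def ind2norm {n : ℕ} (A : Matrix (Fin n) (Fin n) ℝ) : ℝ :=
  ‖Matrix.toEuclideanCLM (𝕜 := ℝ) A‖

/-- The matrix (1/n)·11ᵀ, with every entry 1/n. -/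
noncomputable def Jmat (n : ℕ) : Matrix (Fin n) (Fin n) ℝ :=
  Matrix.of fun _ _ => (1 : ℝ) / n

theorem ContinuousLinearMap.opNorm_lt_one_of_norm_apply_lt {E F : Type*}
    [NormedAddCommGroup E] [NormedSpace ℝ E] [FiniteDimensional ℝ E]
    [SeminormedAddCommGroup F] [NormedSpace ℝ F] (f : E →L[ℝ] F)
    (h : ∀ x ≠ 0, ‖f x‖ < ‖x‖) : ‖f‖ < 1 := by
  rcases subsingleton_or_nontrivial E with _ | _
  · simp [opNorm_subsingleton]
  obtain ⟨x₀, hx₀, hmax⟩ := (isCompact_sphere (0 : E) 1).exists_isMaxOn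
    (NormedSpace.sphere_nonempty.2 zero_le_one) (continuous_norm.comp f.continuous).continuousOn
  rw [mem_sphere_zero_iff_norm] at hx₀
  calc ‖f‖ ≤ ‖f x₀‖ :=
        opNorm_le_of_unit_norm (norm_nonneg _) fun x hx => hmax (mem_sphere_zero_iff_norm.2 hx)
    _ < 1 := hx₀ ▸ h x₀ (norm_ne_zero_iff.1 (by simp [hx₀]))

lemma EuclideanSpace.norm_toLp_sq {ι : Type*} [Fintype ι] (x : ι → ℝ) :
    ‖(WithLp.toLp 2 x : EuclideanSpace ℝ ι)‖ ^ 2 = x ⬝ᵥ x := by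
  rw [EuclideanSpace.real_norm_sq_eq]
  simp [dotProduct, sq]

namespace Matrix

variable {n : ℕ}

lemma mulVec_dotProduct_mulVec_le_ind2norm_sq (A : Matrix (Fin n) (Fin n) ℝ) (x : Fin n → ℝ) :
    A *ᵥ x ⬝ᵥ A *ᵥ x ≤ ind2norm A ^ 2 * (x ⬝ᵥ x) := by
  have h := pow_le_pow_left₀ (norm_nonneg _)
    ((toEuclideanCLM (𝕜 := ℝ) A).le_opNorm (WithLp.toLp 2 x)) 2
  rwa [toEuclideanCLM_toLp, mul_pow, EuclideanSpace.norm_toLp_sq, EuclideanSpace.norm_toLp_sq] at h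

lemma ind2norm_lt_one_of_forall_dotProduct_lt (A : Matrix (Fin n) (Fin n) ℝ)
    (h : ∀ x ≠ 0, A *ᵥ x ⬝ᵥ A *ᵥ x < x ⬝ᵥ x) : ind2norm A < 1 := by
  refine ContinuousLinearMap.opNorm_lt_one_of_norm_apply_lt _ fun v hv => ?_
  rw [← WithLp.toLp_ofLp (p := 2) v, toEuclideanCLM_toLp,
    ← sq_lt_sq₀ (norm_nonneg _) (norm_nonneg _), EuclideanSpace.norm_toLp_sq,
    EuclideanSpace.norm_toLp_sq]
  exact h _ (by simpa using hv)

lemma map_ofReal_mulVec {m ι : Type*} [Fintype ι] (A : Matrix m ι ℝ) (v : ι → ℂ) (i : m) :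
    (A.map Complex.ofReal *ᵥ v) i = ⟨(A *ᵥ fun j => (v j).re) i, (A *ᵥ fun j => (v j).im) i⟩ := by
  apply Complex.ext <;> simp [mulVec, dotProduct, Complex.re_sum, Complex.im_sum]

lemma norm_toEuclideanCLM_map_ofReal_le (A : Matrix (Fin n) (Fin n) ℝ) :
    ‖toEuclideanCLM (𝕜 := ℂ) (A.map Complex.ofReal)‖ ≤ ind2norm A := by
  have hA : 0 ≤ ind2norm A := norm_nonneg _
  refine ContinuousLinearMap.opNorm_le_bound _ hA fun v => ?_
  rw [← sq_le_sq₀ (norm_nonneg _) (by positivity), mul_pow, EuclideanSpace.norm_sq_eq,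
    EuclideanSpace.norm_sq_eq]
  set a : Fin n → ℝ := fun j => (v j).re
  set b : Fin n → ℝ := fun j => (v j).im
  calc ∑ i, ‖(toEuclideanCLM (𝕜 := ℂ) (A.map Complex.ofReal) v) i‖ ^ 2
      = A *ᵥ a ⬝ᵥ A *ᵥ a + A *ᵥ b ⬝ᵥ A *ᵥ b := by
        simp [map_ofReal_mulVec, Complex.sq_norm, Complex.normSq_apply, dotProduct,
          Finset.sum_add_distrib, a, b]
    _ ≤ ind2norm A ^ 2 * (a ⬝ᵥ a) + ind2norm A ^ 2 * (b ⬝ᵥ b) :=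
        add_le_add (mulVec_dotProduct_mulVec_le_ind2norm_sq A a)
          (mulVec_dotProduct_mulVec_le_ind2norm_sq A b)
    _ = ind2norm A ^ 2 * ∑ i, ‖v i‖ ^ 2 := by
        simp [Complex.sq_norm, Complex.normSq_apply, dotProduct, Finset.sum_add_distrib, a, b,
          mul_add]

lemma norm_le_ind2norm_of_mem_spectrum (A : Matrix (Fin n) (Fin n) ℝ) {μ : ℂ}
    (hμ : μ ∈ spectrum ℂ (A.map Complex.ofReal)) : ‖μ‖ ≤ ind2norm A := by
  rcases isEmpty_or_nonempty (Fin n) with _ | _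
  · simp [spectrum.of_subsingleton] at hμ
  rw [← AlgEquiv.spectrum_eq (toEuclideanCLM (n := Fin n) (𝕜 := ℂ)).toAlgEquiv] at hμ
  exact (spectrum.norm_le_norm_of_mem hμ).trans (norm_toEuclideanCLM_map_ofReal_le A)

lemma specRad_le_ind2norm (A : Matrix (Fin n) (Fin n) ℝ) : specRad A ≤ ind2norm A :=
  Real.sSup_le (fun _ ⟨_, hμ, hr⟩ => hr ▸ norm_le_ind2norm_of_mem_spectrum A hμ) (norm_nonneg _)

lemma dotProduct_sub_inv_smul_self_lt {ι : Type*} [Fintype ι] {y v : ι → ℝ} {c : ℝ}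
    (hc : 0 < c) (hv : v ⬝ᵥ v ≤ c * (y ⬝ᵥ v)) (hyv : 0 < y ⬝ᵥ v) :
    (y - c⁻¹ • v) ⬝ᵥ (y - c⁻¹ • v) < y ⬝ᵥ y := by
  have hexp : (y - c⁻¹ • v) ⬝ᵥ (y - c⁻¹ • v)
      = y ⬝ᵥ y - 2 * c⁻¹ * (y ⬝ᵥ v) + c⁻¹ ^ 2 * (v ⬝ᵥ v) := by
    simp only [sub_dotProduct, dotProduct_sub, smul_dotProduct, dotProduct_smul, smul_eq_mul,
      dotProduct_comm v y]
    ring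
  have hquad : c⁻¹ ^ 2 * (v ⬝ᵥ v) ≤ c⁻¹ * (y ⬝ᵥ v) :=
    calc c⁻¹ ^ 2 * (v ⬝ᵥ v) ≤ c⁻¹ ^ 2 * (c * (y ⬝ᵥ v)) := by gcongr
      _ = c⁻¹ * (y ⬝ᵥ v) := by field_simp
  have hgain : 0 < c⁻¹ * (y ⬝ᵥ v) := mul_pos (inv_pos.2 hc) hyv
  rw [hexp]
  linarith

open scoped MatrixOrder in
lemma PosSemidef.exists_mulVec_dotProduct_mulVec_le {L : Matrix (Fin n) (Fin n) ℝ}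
    (hL : L.PosSemidef) : ∃ c > 0, ∀ y, L *ᵥ y ⬝ᵥ L *ᵥ y ≤ c * (y ⬝ᵥ L *ᵥ y) := by
  obtain ⟨B, rfl⟩ := CStarAlgebra.nonneg_iff_eq_star_mul_self.mp hL.nonneg
  refine ⟨ind2norm (star B) ^ 2 + 1, by positivity, fun y => ?_⟩
  have hquad : y ⬝ᵥ (star B * B) *ᵥ y = B *ᵥ y ⬝ᵥ B *ᵥ y := by
    rw [← mulVec_mulVec, dotProduct_mulVec, star_eq_conjTranspose, vecMul_conjTranspose,
      star_trivial, star_trivial]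
  rw [hquad, ← mulVec_mulVec]
  calc star B *ᵥ (B *ᵥ y) ⬝ᵥ star B *ᵥ (B *ᵥ y) ≤ ind2norm (star B) ^ 2 * (B *ᵥ y ⬝ᵥ B *ᵥ y) :=
        mulVec_dotProduct_mulVec_le_ind2norm_sq _ _
    _ ≤ _ := by
        gcongr
        · simpa using dotProduct_star_self_nonneg (B *ᵥ y)
        · linarith

lemma Jmat_mulVec (x : Fin n → ℝ) : Jmat n *ᵥ x = fun _ => (∑ i, x i) / n := by
  ext i
  simp [Jmat, mulVec, dotProduct, div_eq_inv_mul, Finset.mul_sum]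

lemma sum_sub_Jmat_mulVec (x : Fin n → ℝ) : ∑ i, (x - Jmat n *ᵥ x) i = 0 := by
  rcases eq_or_ne n 0 with rfl | hn
  · simp
  have hn' : (n : ℝ) ≠ 0 := Nat.cast_ne_zero.2 hn
  simp [Jmat_mulVec, Finset.sum_sub_distrib, mul_div_cancel₀ _ hn']

lemma dotProduct_sub_Jmat_mulVec_le (x : Fin n → ℝ) :
    (x - Jmat n *ᵥ x) ⬝ᵥ (x - Jmat n *ᵥ x) ≤ x ⬝ᵥ x := by
  set y := x - Jmat n *ᵥ x
  have hsum : ∑ i, y i = 0 := sum_sub_Jmat_mulVec x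
  have horth : y ⬝ᵥ Jmat n *ᵥ x = 0 := by
    simp only [Jmat_mulVec, dotProduct, ← Finset.sum_mul, hsum, zero_mul]
  have hx : x = y + Jmat n *ᵥ x := by simp [y]
  have hJ : 0 ≤ Jmat n *ᵥ x ⬝ᵥ Jmat n *ᵥ x := by
    simpa using dotProduct_star_self_nonneg (Jmat n *ᵥ x)
  conv_rhs => rw [hx]
  simp only [add_dotProduct, dotProduct_add, horth, dotProduct_comm (Jmat n *ᵥ x) y]
  linarith

end Matrix

namespace SimpleGraph

variable {V : Type*} (G : SimpleGraph V)

lemma reachable_of_reflTransGen {r : V → V → Prop} (hr : ∀ a b, r a b → a ≠ b → G.Adj a b)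
    {u v : V} (h : Relation.ReflTransGen r u v) : G.Reachable u v := by
  induction h with
  | refl => rfl
  | @tail b c _ hbc ih =>
    rcases eq_or_ne b c with rfl | hne
    · exact ih
    · exact ih.trans (hr b c hbc hne).reachable

variable [Fintype V] [DecidableEq V] [DecidableRel G.Adj]

lemma one_sub_smul_lapMatrix_mulVec_const {R : Type*} [CommRing R] (α : R) :
    (1 - α • G.lapMatrix R) *ᵥ (fun _ => 1) = fun _ => 1 := by
  rw [sub_mulVec, one_mulVec, smul_mulVec, lapMatrix_mulVec_const_eq_zero, smul_zero, sub_zero]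

lemma transpose_one_sub_smul_lapMatrix {R : Type*} [CommRing R] (α : R) :
    (1 - α • G.lapMatrix R)ᵀ = 1 - α • G.lapMatrix R := by
  rw [transpose_sub, transpose_one, transpose_smul, (G.isSymm_lapMatrix R).eq]

lemma one_sub_smul_lapMatrix_apply_of_not_adj {R : Type*} [CommRing R] (α : R) {i j : V}
    (hij : i ≠ j) (hadj : ¬ G.Adj i j) : (1 - α • G.lapMatrix R) i j = 0 := by
  simp [lapMatrix, degMatrix, hij, hadj]

lemma dotProduct_lapMatrix_mulVec_pos (hG : G.Preconnected) {y : V → ℝ} (hy : y ≠ 0)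
    (hsum : ∑ i, y i = 0) : 0 < y ⬝ᵥ G.lapMatrix ℝ *ᵥ y := by
  have hpsd := posSemidef_lapMatrix ℝ G
  refine lt_of_le_of_ne (by simpa using hpsd.dotProduct_mulVec_nonneg y) fun h0 => ?_
  have hconst := (lapMatrix_mulVec_eq_zero_iff_forall_reachable G).1
    ((hpsd.dotProduct_mulVec_zero_iff y).1 (by simpa using h0.symm))
  obtain ⟨i, hi⟩ := Function.ne_iff.1 hy
  have : Nonempty V := ⟨i⟩
  have : ∑ j, y j = Fintype.card V * y i := by
    simp [fun j => hconst j i (hG j i)]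
  exact mul_ne_zero (Nat.cast_ne_zero.2 Fintype.card_ne_zero) hi (this ▸ hsum)

lemma exists_ind2norm_one_sub_smul_lapMatrix_sub_Jmat_lt_one {n : ℕ} (G : SimpleGraph (Fin n))
    [DecidableRel G.Adj] (hG : G.Preconnected) :
    ∃ α : ℝ, ind2norm (1 - α • G.lapMatrix ℝ - Jmat n) < 1 := by
  obtain ⟨c, hc, hLc⟩ := (posSemidef_lapMatrix ℝ G).exists_mulVec_dotProduct_mulVec_le
  refine ⟨c⁻¹, ind2norm_lt_one_of_forall_dotProduct_lt _ fun x hx => ?_⟩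
  set y := x - Jmat n *ᵥ x
  have hLJ : G.lapMatrix ℝ *ᵥ (Jmat n *ᵥ x) = 0 := by
    rw [Jmat_mulVec, show (fun _ => (∑ i, x i) / n) = ((∑ i, x i) / n) • fun _ : Fin n => (1 : ℝ)
      by ext; simp, mulVec_smul, lapMatrix_mulVec_const_eq_zero, smul_zero]
  have hWx : (1 - c⁻¹ • G.lapMatrix ℝ - Jmat n) *ᵥ x = y - c⁻¹ • G.lapMatrix ℝ *ᵥ y := by
    simp only [sub_mulVec, one_mulVec, smul_mulVec, mulVec_sub, hLJ, sub_zero, y]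
    abel
  rw [hWx]
  rcases eq_or_ne y 0 with hy | hy
  · simpa [hy] using dotProduct_star_self_pos_iff.2 hx
  calc (y - c⁻¹ • G.lapMatrix ℝ *ᵥ y) ⬝ᵥ (y - c⁻¹ • G.lapMatrix ℝ *ᵥ y) < y ⬝ᵥ y :=
        dotProduct_sub_inv_smul_self_lt hc (hLc y)
          (G.dotProduct_lapMatrix_mulVec_pos hG hy (sum_sub_Jmat_mulVec x))
    _ ≤ x ⬝ᵥ x := dotProduct_sub_Jmat_mulVec_le x

end SimpleGraph

theorem optimal_weight_satisfies_consensus_condition_general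
    (n : ℕ) (E : Fin n → Fin n → Prop)
    (hsymm : ∀ i j, E i j → E j i)
    (hrefl : ∀ i, E i i)
    (hconn : ∀ i j, Relation.ReflTransGen E i j)
    (S : Set (Matrix (Fin n) (Fin n) ℝ))
    (hS : S = {W | W.mulVec (fun _ => 1) = (fun _ => 1) ∧
                   Wᵀ.mulVec (fun _ => 1) = (fun _ => 1) ∧
                   ∀ i j, ¬ E i j → W i j = 0})
    (Wstar : Matrix (Fin n) (Fin n) ℝ)
    (hmem : Wstar ∈ S)
    (hmin : ∀ W ∈ S, ind2norm (Wstar - Jmat n) ≤ ind2norm (W - Jmat n)) :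
    ind2norm (Wstar - Jmat n) < 1 ∧
    specRad (Wstar - Jmat n) < 1 ∧
    Wstar.mulVec (fun _ => 1) = (fun _ => 1) ∧
    Wstarᵀ.mulVec (fun _ => 1) = (fun _ => 1) := by
  classical
  let G := SimpleGraph.fromRel E
  have hG : G.Preconnected := fun i j =>
    G.reachable_of_reflTransGen (fun _ _ hE hne => ⟨hne, .inl hE⟩) (hconn i j)
  obtain ⟨α, hα⟩ := G.exists_ind2norm_one_sub_smul_lapMatrix_sub_Jmat_lt_one hG
  have hW : 1 - α • G.lapMatrix ℝ ∈ S := by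
    rw [hS]
    refine ⟨G.one_sub_smul_lapMatrix_mulVec_const α, ?_, fun i j hE => ?_⟩
    · rw [G.transpose_one_sub_smul_lapMatrix]
      exact G.one_sub_smul_lapMatrix_mulVec_const α
    · exact G.one_sub_smul_lapMatrix_apply_of_not_adj α
        (fun hij => hE (hij ▸ hrefl i)) fun hadj => hE (hadj.2.elim id (hsymm j i))
  have hnorm := (hmin _ hW).trans_lt hα
  rw [hS] at hmem
  exact ⟨hnorm, (specRad_le_ind2norm _).trans_lt hnorm, hmem.1, hmem.2.1⟩

theorem optimal_weight_satisfies_consensus_condition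
    (n : ℕ) (hn : 2 ≤ n) (E : Fin n → Fin n → Prop)
    (hsymm : ∀ i j, E i j → E j i)
    (hrefl : ∀ i, E i i)
    (hconn : ∀ i j, Relation.ReflTransGen E i j)
    (S : Set (Matrix (Fin n) (Fin n) ℝ))
    (hS : S = {W | W.mulVec (fun _ => 1) = (fun _ => 1) ∧
                   Wᵀ.mulVec (fun _ => 1) = (fun _ => 1) ∧
                   ∀ i j, ¬ E i j → W i j = 0})
    (Wstar : Matrix (Fin n) (Fin n) ℝ)
    (hmem : Wstar ∈ S)
    (hmin : ∀ W ∈ S, ind2norm (Wstar - Jmat n) ≤ ind2norm (W - Jmat n)) :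
    ind2norm (Wstar - Jmat n) < 1 ∧
    specRad (Wstar - Jmat n) < 1 ∧
    Wstar.mulVec (fun _ => 1) = (fun _ => 1) ∧
    Wstarᵀ.mulVec (fun _ => 1) = (fun _ => 1) :=
  optimal_weight_satisfies_consensus_condition_general n E hsymm hrefl hconn S hS Wstar hmem hmin
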